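/- arXiv:1309.6178 — 3 statements merged into one kernel-verified Lean document; each statement's English description precedes it below -/
import Mathlib

section
/- Let λ be a (normalized) pre-average function. Then ∫₀² ∫₀² λ(s) λ(t) min(s,t) dt ds = 1. -/
open MeasureTheory ProbabilityTheory Real

noncomputable section

/-- `Λ(u) = -∫₀ᵘ λ(v) dv`. -/
def bigLam (lam : ℝ → ℝ) (u : ℝ) : ℝ := -∫ v in (0:ℝ)..u, lam v

/-- A (normalized) pre-average function: piecewise Lipschitz on `[0,2]`,
antisymmetric about `1`, and normalized. -/
structure IsPreAverageFn (lam : ℝ → ℝ) : Prop where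
  piecewise_lipschitz : ∃ (N : ℕ) (t : ℕ → ℝ) (K : NNReal),
      0 < N ∧ t 0 = 0 ∧ t N = 2 ∧ (∀ i < N, t i < t (i + 1)) ∧
      ∀ i < N, LipschitzOnWith K lam (Set.Ioo (t i) (t (i + 1)))
  antisymm : ∀ t ∈ Set.Icc (0:ℝ) 1, lam t = - lam (2 - t)
  normalized : Real.sqrt (2 * ∫ s in (0:ℝ)..1, (∫ u in (0:ℝ)..s, lam u) ^ 2) = 1

/-- `m = n / ⌊√n / c⌋`. -/
def mOf (c : ℝ) (n : ℕ) : ℕ := n / ⌊Real.sqrt n / c⌋₊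

/-- The indices `j` with `j/n ∈ [(i-2)/m , i/m]`. -/
def blockIdx (n m i : ℕ) : Finset ℕ :=
  (Finset.range (n + 1)).filter fun j =>
    ((i : ℝ) - 2) / m ≤ (j : ℝ) / n ∧ (j : ℝ) / n ≤ (i : ℝ) / m

variable {Ω : Type*}

/-- Pre-averaged value `Ā_{i,m} = (m/n) ∑_{j/n ∈ [(i-2)/m, i/m]} λ(m j/n - (i-2)) A_j`. -/
def preAvg (lam : ℝ → ℝ) (n m : ℕ) (A : ℕ → Ω → ℝ) (i : ℕ) (ω : Ω) : ℝ :=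
  ((m : ℝ) / n) * ∑ j ∈ blockIdx n m i,
    lam ((m : ℝ) * j / n - ((i : ℝ) - 2)) * A j ω

/-- Bias correction `𝔟(λ, A)_{i,m}`. -/
def biasCorr (lam : ℝ → ℝ) (n m : ℕ) (A : ℕ → Ω → ℝ) (i : ℕ) (ω : Ω) : ℝ :=
  ((m : ℝ) ^ 2 / (2 * (n : ℝ) ^ 2)) * ∑ j ∈ (blockIdx n m i).filter (fun j => 1 ≤ j),
    (lam ((m : ℝ) * j / n - ((i : ℝ) - 2))) ^ 2 * (A j ω - A (j - 1) ω) ^ 2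

/-- The simplified model: `(W_{j/n})_j` and `(η_{j,n})_j` form a centered jointly Gaussian
family with `Cov(W_{j/n}, W_{l/n}) = min(j,l)/n`, `(η_{j,n})` standard Gaussian i.i.d.
and uncorrelated with the `W` grid values. -/
def IsSimplifiedModel [MeasureSpace Ω] (n : ℕ) (W η : ℕ → Ω → ℝ) : Prop :=
  (∀ j, Measurable (W j)) ∧ (∀ j, Measurable (η j)) ∧
  (∀ a b : ℕ → ℝ, ∃ v : NNReal,
    Measure.map (fun ω => ∑ j ∈ Finset.range (n + 1), (a j * W j ω + b j * η j ω)) ℙ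
      = gaussianReal 0 v) ∧
  (∀ j l, j ≤ n → l ≤ n → ∫ ω, W j ω * W l ω = (min j l : ℝ) / n) ∧
  (∀ j l, j ≤ n → l ≤ n → ∫ ω, η j ω * η l ω = if j = l then 1 else 0) ∧
  (∀ j l, j ≤ n → l ≤ n → ∫ ω, W j ω * η l ω = 0)

/-- The observations `Y_{j,n} = σ W_{j/n} + τ η_{j,n}`. -/
def obs (σ τ : ℝ) (W η : ℕ → Ω → ℝ) (j : ℕ) (ω : Ω) : ℝ := σ * W j ω + τ * η j ω

end

/-!
Writing `min s t = ∫₀² 1{u < s} 1{u < t} du` and applying Fubini twice turns the double integral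
into `∫₀² (∫ᵤ² λ)² du`. Antisymmetry about `1` gives `∫₀² λ = 0`, so `∫ᵤ² λ = -∫₀ᵘ λ`, and makes
`u ↦ ∫₀ᵘ λ` symmetric about `1`; hence the integral is `2 ∫₀¹ (∫₀ᵘ λ)² du = 1`.
-/

open Set

theorem LipschitzOnWith.intervalIntegrable_of_Ioo {f : ℝ → ℝ} {K : NNReal} {a b : ℝ}
    (hab : a ≤ b) (hf : LipschitzOnWith K f (Ioo a b)) : IntervalIntegrable f volume a b := by
  obtain ⟨g, hg, hfg⟩ := hf.extend_real
  rw [intervalIntegrable_iff_integrableOn_Ioo_of_le hab]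
  exact (hg.continuous.integrableOn_Icc.mono_set Ioo_subset_Icc_self).congr_fun hfg.symm
    measurableSet_Ioo

theorem IsPreAverageFn.intervalIntegrable {lam : ℝ → ℝ} (hlam : IsPreAverageFn lam) :
    IntervalIntegrable lam volume 0 2 := by
  obtain ⟨N, t, K, -, ht0, htN, hmono, hlip⟩ := hlam.piecewise_lipschitz
  rw [← ht0, ← htN]
  exact IntervalIntegrable.trans_iterate fun i hi =>
    (hlip i hi).intervalIntegrable_of_Ioo (hmono i hi).le

theorem integral_mul_integral_indicator_comm {α β 𝕜 : Type*} [MeasurableSpace α]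
    [MeasurableSpace β] [RCLike 𝕜] {μ : Measure α} {ν : Measure β} [SFinite μ] [SFinite ν]
    {g : α → 𝕜} {h : β → 𝕜} (hg : Integrable g μ) (hh : Integrable h ν)
    {S : Set (α × β)} (hS : MeasurableSet S) :
    ∫ x, g x * ∫ y, S.indicator 1 (x, y) * h y ∂ν ∂μ
      = ∫ y, h y * ∫ x, S.indicator 1 (x, y) * g x ∂μ ∂ν := by
  have hprod : ∀ x y, S.indicator (fun p => g p.1 * h p.2) (x, y)
      = g x * (S.indicator 1 (x, y) * h y) := by
    intro x y
    by_cases hxy : (x, y) ∈ S <;> simp [hxy]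
  calc ∫ x, g x * ∫ y, S.indicator 1 (x, y) * h y ∂ν ∂μ
      = ∫ x, ∫ y, S.indicator (fun p => g p.1 * h p.2) (x, y) ∂ν ∂μ := by
        simp only [hprod, integral_const_mul]
    _ = ∫ y, ∫ x, S.indicator (fun p => g p.1 * h p.2) (x, y) ∂μ ∂ν :=
        integral_integral_swap ((hg.mul_prod hh).indicator hS)
    _ = ∫ y, h y * ∫ x, S.indicator 1 (x, y) * g x ∂μ ∂ν := by
        simp only [hprod, ← integral_const_mul]
        congr with y
        congr with x
        ring

theorem setIntegral_Ioc_indicator_lt_mul_indicator_lt {s t b : ℝ} (hs : s ∈ Icc 0 b)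
    (ht : t ∈ Icc 0 b) :
    ∫ u in Ioc 0 b, {p : ℝ × ℝ | p.2 < p.1}.indicator 1 (t, u)
      * {p : ℝ × ℝ | p.2 < p.1}.indicator 1 (s, u) = min s t := by
  have hind : ∀ u, {p : ℝ × ℝ | p.2 < p.1}.indicator (1 : ℝ × ℝ → ℝ) (t, u)
      * {p : ℝ × ℝ | p.2 < p.1}.indicator 1 (s, u) = (Iio (min s t)).indicator 1 u := by
    intro u
    by_cases hus : u < s <;> by_cases hut : u < t <;> simp [indicator, hus, hut]
  have hinter : Iio (min s t) ∩ Ioc 0 b = Ioo 0 (min s t) := by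
    ext u
    simp only [mem_inter_iff, mem_Iio, mem_Ioc, mem_Ioo, lt_min_iff]
    constructor
    · rintro ⟨h, h0, -⟩
      exact ⟨h0, h⟩
    · rintro ⟨h0, h⟩
      exact ⟨h, h0, h.1.le.trans hs.2⟩
  rw [setIntegral_congr_fun measurableSet_Ioc fun u _ => hind u,
    integral_indicator_one measurableSet_Iio, measureReal_restrict_apply measurableSet_Iio, hinter,
    Real.volume_real_Ioo_of_le (le_min hs.1 ht.1), sub_zero]

theorem setIntegral_Ioc_indicator_lt_mul {f : ℝ → ℝ} {u b : ℝ} (hu : u ∈ Icc 0 b) :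
    ∫ t in Ioc 0 b, {p : ℝ × ℝ | p.2 < p.1}.indicator 1 (t, u) * f t = ∫ v in u..b, f v := by
  have hind : ∀ t, {p : ℝ × ℝ | p.2 < p.1}.indicator (1 : ℝ × ℝ → ℝ) (t, u) * f t
      = (Ioi u).indicator f t := by
    intro t
    by_cases hut : u < t <;> simp [indicator, hut]
  have hinter : Ioi u ∩ Ioc 0 b = Ioc u b := by
    ext v
    simp only [mem_inter_iff, mem_Ioi, mem_Ioc]
    constructor
    · rintro ⟨h, -, hb⟩
      exact ⟨h, hb⟩
    · rintro ⟨h, hb⟩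
      exact ⟨h, hu.1.trans_lt h, hb⟩
  simp only [hind]
  rw [integral_indicator measurableSet_Ioi, Measure.restrict_restrict measurableSet_Ioi, hinter,
    intervalIntegral.integral_of_le hu.2]

theorem integral_integral_mul_min {f : ℝ → ℝ} {b : ℝ} (hb : 0 ≤ b)
    (hf : IntervalIntegrable f volume 0 b) :
    ∫ s in 0..b, ∫ t in 0..b, f s * f t * min s t = ∫ u in 0..b, (∫ v in u..b, f v) ^ 2 := by
  set S : Set (ℝ × ℝ) := {p | p.2 < p.1}
  have hS : MeasurableSet S := measurableSet_lt measurable_snd measurable_fst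
  have hf' : IntegrableOn f (Ioc 0 b) := (intervalIntegrable_iff_integrableOn_Ioc_of_le hb).1 hf
  have htail : IntegrableOn (fun u => ∫ v in u..b, f v) (Ioc 0 b) := by
    refine ContinuousOn.integrableOn_Icc ?_ |>.mono_set Ioc_subset_Icc_self
    simpa [uIcc_of_le hb] using
      intervalIntegral.continuousOn_primitive_interval_left
        ((intervalIntegrable_iff' enorm_ne_top).1 hf)
  have hinner : ∀ s ∈ Ioc 0 b, ∫ t in Ioc 0 b, f t * min s t
      = ∫ u in Ioc 0 b, S.indicator 1 (s, u) * ∫ v in u..b, f v := by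
    intro s hs
    calc ∫ t in Ioc 0 b, f t * min s t
        = ∫ t in Ioc 0 b, f t * ∫ u in Ioc 0 b, S.indicator 1 (t, u) * S.indicator 1 (s, u) :=
          setIntegral_congr_fun measurableSet_Ioc fun t ht => by
            rw [setIntegral_Ioc_indicator_lt_mul_indicator_lt (Ioc_subset_Icc_self hs)
              (Ioc_subset_Icc_self ht)]
      _ = ∫ u in Ioc 0 b, S.indicator 1 (s, u) * ∫ t in Ioc 0 b, S.indicator 1 (t, u) * f t :=
          integral_mul_integral_indicator_comm hf'
            ((integrable_const (1 : ℝ)).indicator measurableSet_Iio) hS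
      _ = ∫ u in Ioc 0 b, S.indicator 1 (s, u) * ∫ v in u..b, f v :=
          setIntegral_congr_fun measurableSet_Ioc fun u hu => by
            rw [setIntegral_Ioc_indicator_lt_mul (Ioc_subset_Icc_self hu)]
  calc ∫ s in 0..b, ∫ t in 0..b, f s * f t * min s t
      = ∫ s in Ioc 0 b, f s * ∫ t in Ioc 0 b, f t * min s t := by
        simp only [intervalIntegral.integral_of_le hb, mul_assoc, integral_const_mul]
    _ = ∫ s in Ioc 0 b, f s * ∫ u in Ioc 0 b, S.indicator 1 (s, u) * ∫ v in u..b, f v :=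
        setIntegral_congr_fun measurableSet_Ioc fun s hs => by rw [hinner s hs]
    _ = ∫ u in Ioc 0 b, (∫ v in u..b, f v) * ∫ s in Ioc 0 b, S.indicator 1 (s, u) * f s :=
        integral_mul_integral_indicator_comm hf' htail hS
    _ = ∫ u in 0..b, (∫ v in u..b, f v) ^ 2 := by
        rw [intervalIntegral.integral_of_le hb]
        refine setIntegral_congr_fun measurableSet_Ioc fun u hu => ?_
        rw [setIntegral_Ioc_indicator_lt_mul (Ioc_subset_Icc_self hu), sq]

theorem integral_sub_left_eq_neg_of_antisymm {f : ℝ → ℝ} {c u : ℝ} (hu : 0 ≤ u)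
    (h : ∀ x ∈ Icc 0 u, f (c - x) = -f x) : ∫ x in c - u..c, f x = -∫ x in 0..u, f x := by
  calc ∫ x in c - u..c, f x = ∫ x in 0..u, f (c - x) := by
        rw [intervalIntegral.integral_comp_sub_left, sub_zero]
    _ = ∫ x in 0..u, -f x :=
        intervalIntegral.integral_congr fun x hx => h x (by rwa [uIcc_of_le hu] at hx)
    _ = -∫ x in 0..u, f x := intervalIntegral.integral_neg

theorem integral_tail_eq_neg_of_antisymm {f : ℝ → ℝ} {c u : ℝ} (hc : 0 ≤ c)
    (hf : IntervalIntegrable f volume 0 (2 * c)) (h : ∀ x ∈ Icc 0 c, f x = -f (2 * c - x))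
    (hu : u ∈ Icc 0 (2 * c)) : ∫ v in u..2 * c, f v = -∫ v in 0..u, f v := by
  have hsub : ∀ a ∈ Icc 0 (2 * c), IntervalIntegrable f volume 0 a := fun a ha =>
    hf.mono_set (uIcc_subset_uIcc left_mem_uIcc (Icc_subset_uIcc ha))
  have hhalf : ∫ v in c..2 * c, f v = -∫ v in 0..c, f v := by
    rw [← integral_sub_left_eq_neg_of_antisymm hc fun x hx => by linarith [h x hx],
      show 2 * c - c = c by ring]
  have htotal : ∫ v in 0..2 * c, f v = 0 := by
    rw [← intervalIntegral.integral_interval_sub_left hf (hsub c ⟨hc, by linarith⟩)] at hhalf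
    linarith
  rw [← intervalIntegral.integral_interval_sub_left hf (hsub u hu), htotal, zero_sub]

theorem integral_sq_integral_tail_of_antisymm {f : ℝ → ℝ} {c : ℝ} (hc : 0 ≤ c)
    (hf : IntervalIntegrable f volume 0 (2 * c)) (h : ∀ x ∈ Icc 0 c, f x = -f (2 * c - x)) :
    ∫ u in 0..2 * c, (∫ v in u..2 * c, f v) ^ 2 = 2 * ∫ u in 0..c, (∫ v in 0..u, f v) ^ 2 := by
  set F : ℝ → ℝ := fun u => ∫ v in 0..u, f v
  have hsub : ∀ a ∈ Icc 0 (2 * c), ∀ b ∈ Icc 0 (2 * c), uIcc a b ⊆ uIcc 0 (2 * c) :=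
    fun a ha b hb => uIcc_subset_uIcc (Icc_subset_uIcc ha) (Icc_subset_uIcc hb)
  have h0 : (0 : ℝ) ∈ Icc 0 (2 * c) := ⟨le_rfl, by linarith⟩
  have hc' : c ∈ Icc 0 (2 * c) := ⟨hc, by linarith⟩
  have h2c : 2 * c ∈ Icc 0 (2 * c) := ⟨by linarith, le_rfl⟩
  have htail : ∀ u ∈ Icc 0 (2 * c), ∫ v in u..2 * c, f v = -F u := fun u hu =>
    integral_tail_eq_neg_of_antisymm hc hf h hu
  have hsymm : ∀ u ∈ Icc 0 c, F (2 * c - u) = F u := fun u hu => by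
    have := htail (2 * c - u) ⟨by linarith [hu.2], by linarith [hu.1]⟩
    rw [integral_sub_left_eq_neg_of_antisymm hu.1 fun x hx => by
      linarith [h x ⟨hx.1, hx.2.trans hu.2⟩]] at this
    linarith
  have hcont : ContinuousOn (fun u => F u ^ 2) (uIcc 0 (2 * c)) :=
    (intervalIntegral.continuousOn_primitive_interval
      ((intervalIntegrable_iff' enorm_ne_top).1 hf)).pow 2
  calc ∫ u in 0..2 * c, (∫ v in u..2 * c, f v) ^ 2 = ∫ u in 0..2 * c, F u ^ 2 :=
        intervalIntegral.integral_congr fun u hu => by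
          rw [htail u (by rwa [uIcc_of_le h2c.1] at hu), neg_sq]
    _ = (∫ u in 0..c, F u ^ 2) + ∫ u in c..2 * c, F u ^ 2 :=
        (intervalIntegral.integral_add_adjacent_intervals
          (hcont.mono (hsub 0 h0 c hc')).intervalIntegrable (μ := volume)
          (hcont.mono (hsub c hc' (2 * c) h2c)).intervalIntegrable).symm
    _ = (∫ u in 0..c, F u ^ 2) + ∫ u in 0..c, F (2 * c - u) ^ 2 := by
        rw [intervalIntegral.integral_comp_sub_left (fun u => F u ^ 2), sub_zero,
          show 2 * c - c = c by ring]
    _ = 2 * ∫ u in 0..c, F u ^ 2 := by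
        rw [intervalIntegral.integral_congr fun u hu =>
          congrArg (· ^ 2) (hsymm u (by rwa [uIcc_of_le hc] at hu))]
        ring

theorem preAverage_double_integral_min_eq_one (lam : ℝ → ℝ) (hlam : IsPreAverageFn lam) :
    ∫ s in (0:ℝ)..2, ∫ t in (0:ℝ)..2, lam s * lam t * min s t = 1 := by
  have hint : IntervalIntegrable lam volume 0 (2 * 1) := by
    simpa using hlam.intervalIntegrable
  have hsq := integral_sq_integral_tail_of_antisymm zero_le_one hint (by simpa using hlam.antisymm)
  rw [mul_one] at hsq
  rw [integral_integral_mul_min zero_le_two hlam.intervalIntegrable, hsq]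
  exact Real.sqrt_eq_one.mp hlam.normalized
end

section
/- In the simplified model, there are constants C > 0 and N such that for all n ≥ N and all 2 ≤ i ≤ m − 1, the covariance of pre-averaged noise on adjacent blocks satisfies |E[ε̄_{i,m} ε̄_{i+1,m}] + τ²(m/n)∫₀¹ λ(u)λ(1−u) du| ≤ C/n; that is, E[ε̄_{i,m} ε̄_{i+1,m}] = −τ²(m/n)∫₀¹ λ(u)λ(1−u) du + O(1/n) uniformly in i. -/
/-!
Since the `η`'s are orthonormal, only indices `j` shared by the two adjacent blocks contribute,
and there the weights are `λ(x + 1)` and `λ(x)` with `x = m j / n - (i - 1) ∈ [0, 1]`.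
Antisymmetry of `λ` about `1` turns their product into `-λ(x) λ(1 - x)`, so the covariance is
`-τ² (m/n)` times a Riemann sum of mesh `m/n` for `∫₀¹ λ(u) λ(1 - u) du`. The integrand is bounded
and Lipschitz away from finitely many breakpoints, so the Riemann sum is off by `O(m/n)`: each
breakpoint spoils at most two cells. Finally `m = O(√n)`, so `(m/n)² = O(1/n)`.
-/

open MeasureTheory ProbabilityTheory Real

open Set

def PiecewiseLipschitzOn (f : ℝ → ℝ) (K : ℝ) (S : Finset ℝ) (a b : ℝ) : Prop :=
  ∀ x y, a ≤ x → x ≤ y → y ≤ b → (∀ s ∈ S, s ∉ Icc x y) → |f y - f x| ≤ K * (y - x)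

namespace PiecewiseLipschitzOn

variable {f g : ℝ → ℝ} {K Kf Kg Mf Mg a b : ℝ} {S Sf Sg : Finset ℝ}

theorem mono (hf : PiecewiseLipschitzOn f K S a b) {a' b' : ℝ} (ha : a ≤ a') (hb : b' ≤ b) :
    PiecewiseLipschitzOn f K S a' b' :=
  fun x y hx hxy hy hS => hf x y (ha.trans hx) hxy (hy.trans hb) hS

theorem comp_sub_left (hf : PiecewiseLipschitzOn f K S a b) (c : ℝ) :
    PiecewiseLipschitzOn (fun x => f (c - x)) K (S.image (c - ·)) (c - b) (c - a) := by
  intro x y hx hxy hy hS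
  have hS' : ∀ s ∈ S, s ∉ Icc (c - y) (c - x) := fun s hs hmem =>
    hS (c - s) (Finset.mem_image_of_mem _ hs) ⟨by linarith [hmem.2], by linarith [hmem.1]⟩
  rw [abs_sub_comm]
  convert hf (c - y) (c - x) (by linarith) (by linarith) (by linarith) hS' using 1
  ring

theorem mul (hf : PiecewiseLipschitzOn f Kf Sf a b) (hg : PiecewiseLipschitzOn g Kg Sg a b)
    (hMf : ∀ x ∈ Icc a b, |f x| ≤ Mf) (hMg : ∀ x ∈ Icc a b, |g x| ≤ Mg) :
    PiecewiseLipschitzOn (fun x => f x * g x) (Mf * Kg + Mg * Kf) (Sf ∪ Sg) a b := by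
  intro x y hx hxy hy hS
  have hfy := hMf y ⟨hx.trans hxy, hy⟩
  have hgx := hMg x ⟨hx, hxy.trans hy⟩
  have hdf := hf x y hx hxy hy fun s hs => hS s (Finset.mem_union_left _ hs)
  have hdg := hg x y hx hxy hy fun s hs => hS s (Finset.mem_union_right _ hs)
  calc |f y * g y - f x * g x| = |f y * (g y - g x) + g x * (f y - f x)| := by ring_nf
    _ ≤ |f y| * |g y - g x| + |g x| * |f y - f x| := by
      rw [← abs_mul, ← abs_mul]; exact abs_add_le _ _
    _ ≤ Mf * (Kg * (y - x)) + Mg * (Kf * (y - x)) := by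
      gcongr
      · exact (abs_nonneg _).trans hfy
      · exact (abs_nonneg _).trans hgx
    _ = (Mf * Kg + Mg * Kf) * (y - x) := by ring

end PiecewiseLipschitzOn

theorem LipschitzOnWith.isBounded_image {α β : Type*} [PseudoMetricSpace α]
    [PseudoMetricSpace β] {K : NNReal} {f : α → β} {s : Set α} (hf : LipschitzOnWith K f s)
    (hs : Bornology.IsBounded s) : Bornology.IsBounded (f '' s) := by
  obtain ⟨C, hC⟩ := Metric.isBounded_iff.1 hs
  exact Metric.isBounded_iff.2 ⟨K * C, forall_mem_image.2 fun x hx => forall_mem_image.2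
    fun y hy => (hf.dist_le_mul x hx y hy).trans (by gcongr; exact hC hx hy)⟩

section Partition

variable {f : ℝ → ℝ} {N : ℕ} {t : ℕ → ℝ} {K : NNReal}

theorem exists_mem_Ioo_of_mem_Icc {x : ℝ} (hx : x ∈ Icc (t 0) (t N)) (hxt : ∀ i ≤ N, t i ≠ x) :
    ∃ i < N, x ∈ Ioo (t i) (t (i + 1)) := by
  induction N with
  | zero => exact absurd (le_antisymm hx.1 hx.2) (hxt 0 le_rfl)
  | succ N ih =>
    by_cases hxN : x ≤ t N
    · obtain ⟨i, hi, hxi⟩ := ih ⟨hx.1, hxN⟩ fun i hi => hxt i (by omega)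
      exact ⟨i, by omega, hxi⟩
    · exact ⟨N, by omega, lt_of_not_ge hxN, lt_of_le_of_ne hx.2 (hxt (N + 1) le_rfl).symm⟩

variable (hf : ∀ i < N, LipschitzOnWith K f (Ioo (t i) (t (i + 1))))
include hf

theorem piecewiseLipschitzOn_of_partition :
    PiecewiseLipschitzOn f K ((Finset.range (N + 1)).image t) (t 0) (t N) := by
  intro x y hx hxy hy hS
  have hS' : ∀ i ≤ N, t i ∉ Icc x y := fun i hi =>
    hS (t i) (Finset.mem_image_of_mem t (Finset.mem_range.2 (by omega)))
  obtain ⟨i, hi, hxi⟩ := exists_mem_Ioo_of_mem_Icc ⟨hx, hxy.trans hy⟩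
    fun i hi hti => hS' i hi ⟨hti.ge, hti ▸ hxy⟩
  have hyi : y < t (i + 1) := lt_of_not_ge fun hty => hS' (i + 1) hi ⟨hxi.2.le, hty⟩
  have := (hf i hi).dist_le_mul y ⟨hxi.1.trans_le hxy, hyi⟩ x hxi
  rwa [Real.dist_eq, Real.dist_eq, abs_of_nonneg (sub_nonneg.2 hxy)] at this

theorem isBounded_image_Icc_of_partition : Bornology.IsBounded (f '' Icc (t 0) (t N)) := by
  refine ((Bornology.isBounded_biUnion_finset (Finset.range N)).2 fun i hi =>
    (hf i (Finset.mem_range.1 hi)).isBounded_image (Metric.isBounded_Ioo _ _)).union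
    (((Finset.range (N + 1)).image (f ∘ t)).finite_toSet.isBounded) |>.subset ?_
  rintro _ ⟨x, hx, rfl⟩
  by_cases hxt : ∃ i ≤ N, t i = x
  · obtain ⟨i, hi, rfl⟩ := hxt
    exact Or.inr (Finset.mem_image_of_mem _ (Finset.mem_range.2 (by omega)))
  · push Not at hxt
    obtain ⟨i, hi, hxi⟩ := exists_mem_Ioo_of_mem_Icc hx hxt
    exact Or.inl (mem_biUnion (Finset.mem_range.2 hi) (mem_image_of_mem f hxi))

theorem intervalIntegrable_of_partition (ht : ∀ i < N, t i ≤ t (i + 1)) :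
    IntervalIntegrable f volume (t 0) (t N) := by
  refine IntervalIntegrable.trans_iterate fun i hi => ?_
  obtain ⟨M, hM⟩ :=
    ((hf i hi).isBounded_image (Metric.isBounded_Ioo _ _)).exists_norm_le
  refine (intervalIntegrable_iff_integrableOn_Ioo_of_le (ht i hi)).2 <|
    IntegrableOn.of_bound measure_Ioo_lt_top
      ((hf i hi).continuousOn.aestronglyMeasurable measurableSet_Ioo) M ?_
  exact (ae_restrict_iff' measurableSet_Ioo).2 <| ae_of_all _ fun x hx =>
    hM _ (mem_image_of_mem f hx)

end Partition

theorem IntervalIntegrable.mul_of_abs_le {f g : ℝ → ℝ} {a b M : ℝ} (hab : a ≤ b)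
    (hf : IntervalIntegrable f volume a b) (hg : IntervalIntegrable g volume a b)
    (hM : ∀ x ∈ Ioc a b, |g x| ≤ M) : IntervalIntegrable (fun x => f x * g x) volume a b := by
  rw [intervalIntegrable_iff_integrableOn_Ioc_of_le hab] at *
  exact hf.mul_bdd hg.aestronglyMeasurable ((ae_restrict_iff' measurableSet_Ioc).2 (ae_of_all _ hM))

theorem card_filter_mem_Icc_le_two {h : ℝ} (hh : 0 < h) (s u : ℝ) (N : ℕ) :
    ((Finset.range N).filter fun k : ℕ => s ∈ Icc (u + k * h) (u + k * h + h)).card ≤ 2 := by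
  set r := (s - u) / h
  have hsub : (Finset.range N).filter (fun k : ℕ => s ∈ Icc (u + k * h) (u + k * h + h)) ⊆
      Finset.Icc (⌊r⌋₊ - 1) ⌊r⌋₊ := by
    intro k hk
    obtain ⟨hlo, hhi⟩ := (Finset.mem_filter.1 hk).2
    have hkr : (k : ℝ) ≤ r := by rw [le_div_iff₀ hh]; linarith
    have hrk : r ≤ k + 1 := by rw [div_le_iff₀ hh]; linarith
    have hfl : ⌊r⌋₊ < k + 2 :=
      (Nat.floor_lt ((Nat.cast_nonneg k).trans hkr)).2 (by push_cast; linarith)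
    exact Finset.mem_Icc.2 ⟨by omega, Nat.le_floor hkr⟩
  refine (Finset.card_le_card hsub).trans ?_
  rw [Nat.card_Icc]
  omega

theorem sum_card_filter_mem_Icc_le {h : ℝ} (hh : 0 < h) (S : Finset ℝ) (u : ℝ) (N : ℕ) :
    ∑ k ∈ Finset.range N, (S.filter fun s => s ∈ Icc (u + k * h) (u + k * h + h)).card
      ≤ 2 * S.card :=
  calc _ = ∑ s ∈ S, ((Finset.range N).filter
          fun k : ℕ => s ∈ Icc (u + k * h) (u + k * h + h)).card :=
        Finset.sum_card_bipartiteAbove_eq_sum_card_bipartiteBelow _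
    _ ≤ S.card • 2 := Finset.sum_le_card_nsmul _ _ 2 fun s _ => card_filter_mem_Icc_le_two hh s u N
    _ = 2 * S.card := by rw [smul_eq_mul, mul_comm]

section RiemannSum

variable {f : ℝ → ℝ} {K M a b h u : ℝ} {S : Finset ℝ} {N : ℕ}

theorem abs_integral_le_mul_of_abs_le {x y : ℝ} (hxy : x ≤ y) (hM : ∀ t ∈ Ioc x y, |f t| ≤ M) :
    |∫ t in x..y, f t| ≤ M * (y - x) := by
  have := intervalIntegral.norm_integral_le_of_norm_le_const (f := f) (C := M)
    (by rwa [uIoc_of_le hxy])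
  rwa [Real.norm_eq_abs, abs_of_nonneg (sub_nonneg.2 hxy)] at this

theorem abs_mul_sub_integral_le {D : ℝ} (hh : 0 ≤ h)
    (hf : IntervalIntegrable f volume u (u + h)) (hD : ∀ t ∈ Ioc u (u + h), |f t - f u| ≤ D) :
    |h * f u - ∫ t in u..u + h, f t| ≤ D * h := by
  have hconst : h * f u - ∫ t in u..u + h, f t = ∫ t in u..u + h, (f u - f t) := by
    rw [intervalIntegral.integral_sub intervalIntegrable_const hf,
      intervalIntegral.integral_const, smul_eq_mul, add_sub_cancel_left]
  have := abs_integral_le_mul_of_abs_le (f := fun t => f u - f t) (le_add_of_nonneg_right hh)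
    fun t ht => by rw [abs_sub_comm]; exact hD t ht
  rwa [add_sub_cancel_left, ← hconst] at this

theorem abs_mul_sub_integral_le_of_piecewiseLipschitzOn (hf : PiecewiseLipschitzOn f K S a b)
    (hK : 0 ≤ K) (hM : ∀ x ∈ Icc a b, |f x| ≤ M) (hh : 0 ≤ h)
    (hint : IntervalIntegrable f volume u (u + h)) (hu : Icc u (u + h) ⊆ Icc a b) :
    |h * f u - ∫ t in u..u + h, f t|
      ≤ K * h * h + 2 * M * h * (S.filter fun s => s ∈ Icc u (u + h)).card := by
  have hu_mem : u ∈ Icc a b := hu ⟨le_rfl, by linarith⟩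
  rcases (S.filter fun s => s ∈ Icc u (u + h)).eq_empty_or_nonempty with hgood | hbad
  · rw [hgood, Finset.card_empty, Nat.cast_zero, mul_zero, add_zero]
    refine abs_mul_sub_integral_le hh hint fun t ht => ?_
    refine (hf u t hu_mem.1 ht.1.le (hu ⟨ht.1.le, ht.2⟩).2 fun s hs hst => ?_).trans ?_
    · exact Finset.eq_empty_iff_forall_notMem.1 hgood s
        (Finset.mem_filter.2 ⟨hs, hst.1, hst.2.trans ht.2⟩)
    · nlinarith [ht.2]
  · have hcard : (1 : ℝ) ≤ (S.filter fun s => s ∈ Icc u (u + h)).card := by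
      exact_mod_cast hbad.card_pos
    have hM0 : 0 ≤ M := (abs_nonneg _).trans (hM u hu_mem)
    refine (abs_mul_sub_integral_le hh hint fun t ht => ?_).trans
      (show 2 * M * h ≤ _ by
        nlinarith [mul_le_mul_of_nonneg_left hcard (by positivity : 0 ≤ 2 * M * h),
          mul_nonneg (mul_nonneg hK hh) hh])
    calc |f t - f u| ≤ |f t| + |f u| := abs_sub _ _
      _ ≤ M + M := add_le_add (hM t (hu ⟨ht.1.le, ht.2⟩)) (hM u hu_mem)
      _ = 2 * M := by ring

theorem abs_sum_range_sub_integral_le (hf : PiecewiseLipschitzOn f K S a b) (hK : 0 ≤ K)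
    (hM : ∀ x ∈ Icc a b, |f x| ≤ M) (hint : IntervalIntegrable f volume a b) (hh : 0 < h)
    (hu : a ≤ u) (huN : u + N * h ≤ b) :
    |∑ k ∈ Finset.range N, h * f (u + k * h) - ∫ t in u..u + N * h, f t|
      ≤ (K * (N * h) + 4 * M * S.card) * h := by
  have hNh : 0 ≤ (N : ℝ) * h := by positivity
  have hM0 : 0 ≤ M := (abs_nonneg _).trans (hM u ⟨hu, by linarith⟩)
  have hcell_sub : ∀ k < N, Icc (u + k * h) (u + k * h + h) ⊆ Icc a b := fun k hk => by
    have : (k : ℝ) + 1 ≤ N := by exact_mod_cast hk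
    exact Icc_subset_Icc (by nlinarith [(Nat.cast_nonneg k : (0:ℝ) ≤ k)]) (by nlinarith)
  have hcell_int : ∀ k < N, IntervalIntegrable f volume (u + k * h) (u + k * h + h) :=
    fun k hk => hint.mono_set <| by
      rw [uIcc_of_le (by linarith), uIcc_of_le (by linarith)]; exact hcell_sub k hk
  have hsplit : ∫ t in u..u + N * h, f t =
      ∑ k ∈ Finset.range N, ∫ t in u + k * h..u + k * h + h, f t := by
    have := intervalIntegral.sum_integral_adjacent_intervals (a := fun k : ℕ => u + k * h)
      (μ := volume) (f := f) (n := N) fun k hk => by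
        simpa [add_mul, add_assoc] using hcell_int k hk
    simp only [Nat.cast_add, Nat.cast_one, add_mul, one_mul, ← add_assoc, Nat.cast_zero,
      zero_mul, add_zero] at this
    exact this.symm
  have hcount : (∑ k ∈ Finset.range N,
      ((S.filter fun s => s ∈ Icc (u + k * h) (u + k * h + h)).card : ℝ)) ≤ 2 * S.card := by
    exact_mod_cast sum_card_filter_mem_Icc_le hh S u N
  rw [hsplit, ← Finset.sum_sub_distrib]
  calc _ ≤ ∑ k ∈ Finset.range N, (K * h * h + 2 * M * h *
          (S.filter fun s => s ∈ Icc (u + k * h) (u + k * h + h)).card) :=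
        (Finset.abs_sum_le_sum_abs _ _).trans <| Finset.sum_le_sum fun k hk =>
          abs_mul_sub_integral_le_of_piecewiseLipschitzOn hf hK hM hh.le
            (hcell_int k (Finset.mem_range.1 hk)) (hcell_sub k (Finset.mem_range.1 hk))
    _ = N * (K * h * h) + 2 * M * h * ∑ k ∈ Finset.range N,
          ((S.filter fun s => s ∈ Icc (u + k * h) (u + k * h + h)).card : ℝ) := by
        rw [Finset.sum_add_distrib, Finset.sum_const, Finset.card_range, nsmul_eq_mul,
          Finset.mul_sum]
    _ ≤ N * (K * h * h) + 2 * M * h * (2 * S.card) := by gcongr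
    _ = (K * (N * h) + 4 * M * S.card) * h := by ring

theorem abs_sum_range_succ_sub_integral_le (hf : PiecewiseLipschitzOn f K S a b) (hK : 0 ≤ K)
    (hM : ∀ x ∈ Icc a b, |f x| ≤ M) (hint : IntervalIntegrable f volume a b) (hh : 0 < h)
    (hu : a ≤ u) (hua : u ≤ a + h) (hbN : b - h ≤ u + N * h) (huN : u + N * h ≤ b) :
    |∑ k ∈ Finset.range (N + 1), h * f (u + k * h) - ∫ t in a..b, f t|
      ≤ (K * (b - a) + (4 * S.card + 3) * M) * h := by
  set v := u + N * h
  have hNh : 0 ≤ (N : ℝ) * h := by positivity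
  have hM0 : 0 ≤ M := (abs_nonneg _).trans (hM u ⟨hu, by linarith⟩)
  have hsub : ∀ x y, a ≤ x → x ≤ y → y ≤ b → IntervalIntegrable f volume x y :=
    fun x y hx hxy hy => hint.mono_set <| by
      rw [uIcc_of_le hxy, uIcc_of_le (by linarith)]; exact Icc_subset_Icc hx hy
  have hsplit : ∫ t in a..b, f t = (∫ t in a..u, f t) + (∫ t in u..v, f t) + ∫ t in v..b, f t := by
    rw [intervalIntegral.integral_add_adjacent_intervals (hsub a u le_rfl hu (by linarith))
        (hsub u v hu (by linarith) huN),
      intervalIntegral.integral_add_adjacent_intervals (hsub a v le_rfl (by linarith) huN)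
        (hsub v b (by linarith) huN le_rfl)]
  have hleft : |∫ t in a..u, f t| ≤ M * h :=
    (abs_integral_le_mul_of_abs_le hu fun t ht => hM t ⟨ht.1.le, by linarith [ht.2]⟩).trans
      (by nlinarith)
  have hright : |∫ t in v..b, f t| ≤ M * h :=
    (abs_integral_le_mul_of_abs_le huN fun t ht => hM t ⟨by linarith [ht.1], ht.2⟩).trans
      (by nlinarith)
  have hlast : |h * f v| ≤ M * h := by
    rw [abs_mul, abs_of_pos hh, mul_comm]
    exact mul_le_mul_of_nonneg_right (hM v ⟨by linarith, huN⟩) hh.le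
  have hcells := abs_sum_range_sub_integral_le hf hK hM hint hh hu huN
  have hNK : K * (N * h) ≤ K * (b - a) := mul_le_mul_of_nonneg_left (by linarith) hK
  rw [Finset.sum_range_succ, hsplit]
  set E := ∑ k ∈ Finset.range N, h * f (u + k * h) - ∫ t in u..v, f t
  calc _ = |E + h * f v - (∫ t in a..u, f t) - ∫ t in v..b, f t| := by congr 1; ring
    _ ≤ |E + h * f v - ∫ t in a..u, f t| + |∫ t in v..b, f t| := abs_sub _ _
    _ ≤ |E + h * f v| + |∫ t in a..u, f t| + |∫ t in v..b, f t| := by gcongr; exact abs_sub _ _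
    _ ≤ |E| + |h * f v| + |∫ t in a..u, f t| + |∫ t in v..b, f t| := by
        gcongr; exact abs_add_le _ _
    _ ≤ (K * (b - a) + (4 * S.card + 3) * M) * h := by nlinarith

theorem abs_sum_Icc_sub_integral_le (hf : PiecewiseLipschitzOn f K S a b) (hK : 0 ≤ K)
    (hM : ∀ x ∈ Icc a b, |f x| ≤ M) (hint : IntervalIntegrable f volume a b) (hh : 0 < h)
    (hhab : h ≤ b - a) {θ : ℝ} (hθ : 0 ≤ a + θ) :
    |∑ j ∈ Finset.Icc ⌈(a + θ) / h⌉₊ ⌊(b + θ) / h⌋₊, h * f (j * h - θ) - ∫ t in a..b, f t|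
      ≤ (K * (b - a) + (4 * S.card + 3) * M) * h := by
  set p := ⌈(a + θ) / h⌉₊
  set q := ⌊(b + θ) / h⌋₊
  have hp_ge : a + θ ≤ p * h := (div_le_iff₀ hh).1 (Nat.le_ceil _)
  have hp_lt : p * h < a + θ + h := by
    have := mul_lt_mul_of_pos_right (Nat.ceil_lt_add_one (div_nonneg hθ hh.le)) hh
    rwa [add_mul, div_mul_cancel₀ _ hh.ne', one_mul] at this
  have hq_le : q * h ≤ b + θ := (le_div_iff₀ hh).1 (Nat.floor_le (div_nonneg (by linarith) hh.le))
  have hq_gt : b + θ < q * h + h := by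
    have := mul_lt_mul_of_pos_right (Nat.lt_floor_add_one ((b + θ) / h)) hh
    rwa [add_mul, div_mul_cancel₀ _ hh.ne', one_mul] at this
  have hpq : p ≤ q := Nat.le_floor <| (le_div_iff₀ hh).2 (by linarith)
  have hsum : ∑ j ∈ Finset.Icc p q, h * f (j * h - θ) =
      ∑ k ∈ Finset.range (q - p + 1), h * f ((p * h - θ) + k * h) := by
    rw [← Finset.Ico_add_one_right_eq_Icc, Finset.sum_Ico_eq_sum_range, Nat.sub_add_comm hpq]
    refine Finset.sum_congr rfl fun k _ => ?_
    push_cast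
    ring_nf
  have hqp : (p * h - θ) + ((q - p : ℕ) : ℝ) * h = q * h - θ := by
    rw [Nat.cast_sub hpq]; ring
  rw [hsum]
  exact abs_sum_range_succ_sub_integral_le hf hK hM hint hh (by linarith) (by linarith)
    (by rw [hqp]; linarith) (by rw [hqp]; linarith)

end RiemannSum

namespace IsPreAverageFn

variable {lam : ℝ → ℝ}

theorem exists_piecewiseLipschitzOn (hlam : IsPreAverageFn lam) :
    ∃ (K : NNReal) (S : Finset ℝ), PiecewiseLipschitzOn lam K S 0 2 := by
  obtain ⟨N, t, K, -, ht0, ht2, -, hlip⟩ := hlam.piecewise_lipschitz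
  exact ⟨K, _, ht0 ▸ ht2 ▸ piecewiseLipschitzOn_of_partition hlip⟩

theorem exists_pos_bound (hlam : IsPreAverageFn lam) :
    ∃ M > 0, ∀ x ∈ Icc (0:ℝ) 2, |lam x| ≤ M := by
  obtain ⟨N, t, K, -, ht0, ht2, -, hlip⟩ := hlam.piecewise_lipschitz
  obtain ⟨M, hM, hbound⟩ := (isBounded_image_Icc_of_partition hlip).exists_pos_norm_le
  exact ⟨M, hM, fun x hx => hbound _ (mem_image_of_mem lam (ht0 ▸ ht2 ▸ hx))⟩

theorem intervalIntegrable_s6 (hlam : IsPreAverageFn lam) : IntervalIntegrable lam volume 0 2 := by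
  obtain ⟨N, t, K, -, ht0, ht2, hmono, hlip⟩ := hlam.piecewise_lipschitz
  exact ht0 ▸ ht2 ▸ intervalIntegrable_of_partition hlip fun i hi => (hmono i hi).le

theorem exists_abs_sum_sub_integral_le (hlam : IsPreAverageFn lam) :
    ∃ C > 0, ∀ h : ℝ, 0 < h → h ≤ 1 → ∀ θ : ℝ, 0 ≤ θ →
      |∑ j ∈ Finset.Icc ⌈θ / h⌉₊ ⌊(θ + 1) / h⌋₊, h * (lam (j * h - θ) * lam (1 - (j * h - θ)))
        - ∫ u in (0:ℝ)..1, lam u * lam (1 - u)| ≤ C * h := by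
  obtain ⟨K, S, hlip⟩ := hlam.exists_piecewiseLipschitzOn
  obtain ⟨M, hM, hbound⟩ := hlam.exists_pos_bound
  have hbound₁ : ∀ x ∈ Icc (0:ℝ) 1, |lam x| ≤ M := fun x hx =>
    hbound x ⟨hx.1, by linarith [hx.2]⟩
  have hbound₂ : ∀ x ∈ Icc (0:ℝ) 1, |lam (1 - x)| ≤ M := fun x hx =>
    hbound _ ⟨by linarith [hx.2], by linarith [hx.1]⟩
  have hlip₂ : PiecewiseLipschitzOn (fun x => lam (1 - x)) K (S.image (1 - ·)) 0 1 :=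
    (hlip.comp_sub_left 1).mono (by norm_num) (by norm_num)
  have hint₁ : IntervalIntegrable lam volume 0 1 :=
    hlam.intervalIntegrable_s6.mono_set (by simp [uIcc_of_le, Icc_subset_Icc_right])
  have hint₂ : IntervalIntegrable (fun x => lam (1 - x)) volume 0 1 := by
    simpa using (hint₁.comp_sub_left 1).symm
  have hint := hint₁.mul_of_abs_le zero_le_one hint₂ fun x hx => hbound₂ x (Ioc_subset_Icc_self hx)
  refine ⟨M * K + M * K + (4 * (S ∪ S.image (1 - ·)).card + 3) * (M * M), by positivity,
    fun h hh hh1 θ hθ => ?_⟩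
  have hg := abs_sum_Icc_sub_integral_le ((hlip.mono le_rfl one_le_two).mul hlip₂ hbound₁ hbound₂)
    (by positivity) (fun x hx => (abs_mul _ _).trans_le <|
      mul_le_mul (hbound₁ x hx) (hbound₂ x hx) (abs_nonneg _) hM.le)
    hint hh (by linarith) (by linarith : 0 ≤ 0 + θ)
  simpa [zero_add, add_comm θ 1] using hg

end IsPreAverageFn

theorem integral_sum_mul_sum_of_orthonormal {ι Ω : Type*} [DecidableEq ι] [MeasurableSpace Ω]
    {μ : Measure Ω} {η : ι → Ω → ℝ} {s u : Finset ι}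
    (hη : ∀ j ∈ s ∪ u, AEStronglyMeasurable (η j) μ)
    (hcov : ∀ j ∈ s ∪ u, ∀ l ∈ s ∪ u, ∫ ω, η j ω * η l ω ∂μ = if j = l then 1 else 0)
    (a b : ι → ℝ) :
    ∫ ω, (∑ j ∈ s, a j * η j ω) * (∑ l ∈ u, b l * η l ω) ∂μ = ∑ j ∈ s ∩ u, a j * b j := by
  -- `∫ η j ^ 2 = 1 ≠ 0` forces integrability, since non-integrable functions integrate to `0`.
  have hL2 : ∀ j ∈ s ∪ u, MemLp (η j) 2 μ := fun j hj => by
    refine (memLp_two_iff_integrable_sq (hη j hj)).2 <| Integrable.of_integral_ne_zero ?_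
    simp [sq, hcov j hj j hj]
  have hint : ∀ j ∈ s, ∀ l ∈ u, Integrable (fun ω => a j * η j ω * (b l * η l ω)) μ :=
    fun j hj l hl => ((hL2 j (Finset.mem_union_left _ hj)).const_mul (a j)).integrable_mul
        ((hL2 l (Finset.mem_union_right _ hl)).const_mul (b l))
  have hterm : ∀ j ∈ s, ∀ l ∈ u, ∫ ω, a j * η j ω * (b l * η l ω) ∂μ
      = a j * b l * if j = l then 1 else 0 := fun j hj l hl => by
    rw [← hcov j (Finset.mem_union_left _ hj) l (Finset.mem_union_right _ hl),
      ← integral_const_mul]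
    congr 1 with ω
    ring
  calc _ = ∫ ω, ∑ j ∈ s, ∑ l ∈ u, a j * η j ω * (b l * η l ω) ∂μ := by
        simp_rw [Finset.sum_mul_sum]
    _ = ∑ j ∈ s, ∑ l ∈ u, a j * b l * if j = l then 1 else 0 := by
        rw [integral_finsetSum _ fun j hj => integrable_finsetSum _ fun l hl => hint j hj l hl]
        refine Finset.sum_congr rfl fun j hj => ?_
        rw [integral_finsetSum _ fun l hl => hint j hj l hl]
        exact Finset.sum_congr rfl fun l hl => hterm j hj l hl
    _ = ∑ j ∈ s ∩ u, a j * b j := by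
        simp_rw [mul_ite, mul_one, mul_zero, Finset.sum_ite_eq, Finset.sum_ite_mem]

theorem le_of_mem_blockIdx {n m i j : ℕ} (hj : j ∈ blockIdx n m i) : j ≤ n :=
  Nat.lt_succ_iff.1 (Finset.mem_range.1 (Finset.mem_filter.1 hj).1)

theorem blockIdx_inter_blockIdx_succ {n m k : ℕ} (hn : 0 < n) (hkm : k + 1 ≤ m) :
    blockIdx n m (k + 1) ∩ blockIdx n m (k + 1 + 1) =
      Finset.Icc ⌈(k : ℝ) / (m / n)⌉₊ ⌊((k : ℝ) + 1) / (m / n)⌋₊ := by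
  have hn' : (0 : ℝ) < n := by exact_mod_cast hn
  have hm' : (0 : ℝ) < m := by exact_mod_cast (by omega : 0 < m)
  have hh : (0 : ℝ) < m / n := by positivity
  have hkm' : (k : ℝ) + 1 ≤ m := by exact_mod_cast hkm
  ext j
  have hy : (j : ℝ) / n * m = j * (m / n) := by ring
  simp only [blockIdx, Finset.mem_inter, Finset.mem_filter, Finset.mem_range, Finset.mem_Icc,
    Nat.ceil_le, Nat.le_floor_iff (by positivity : (0:ℝ) ≤ ((k : ℝ) + 1) / (m / n)),
    div_le_iff₀ hm', le_div_iff₀ hm', div_le_iff₀ hh, le_div_iff₀ hh, hy]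
  push_cast
  constructor
  · rintro ⟨⟨-, -, h₂⟩, -, h₁, -⟩
    exact ⟨by linarith, h₂⟩
  · rintro ⟨h₁, h₂⟩
    have hjn : (j : ℝ) ≤ n := le_of_mul_le_mul_right
      (by rw [mul_div_cancel₀ _ hn'.ne']; linarith) hh
    have hjn' : j < n + 1 := Nat.lt_succ_of_le (by exact_mod_cast hjn)
    exact ⟨⟨hjn', by linarith, h₂⟩, hjn', by linarith, by linarith⟩

theorem integral_preAvg_mul_preAvg_succ {Ω : Type*} [MeasurableSpace Ω] {μ : Measure Ω}
    {lam : ℝ → ℝ} (hanti : ∀ t ∈ Icc (0:ℝ) 1, lam t = -lam (2 - t)) {n m k : ℕ}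
    {η : ℕ → Ω → ℝ} (hη : ∀ j ≤ n, AEStronglyMeasurable (η j) μ)
    (hcov : ∀ j l, j ≤ n → l ≤ n → ∫ ω, η j ω * η l ω ∂μ = if j = l then 1 else 0)
    (hn : 0 < n) (hkm : k + 1 ≤ m) (τ : ℝ) :
    ∫ ω, preAvg lam n m (fun j ω => τ * η j ω) (k + 1) ω *
        preAvg lam n m (fun j ω => τ * η j ω) (k + 1 + 1) ω ∂μ
      = -(τ ^ 2 * (m / n)) * ∑ j ∈ Finset.Icc ⌈(k : ℝ) / (m / n)⌉₊ ⌊((k : ℝ) + 1) / (m / n)⌋₊,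
          m / n * (lam (j * (m / n) - k) * lam (1 - (j * (m / n) - k))) := by
  have hpre : ∀ i ω, preAvg lam n m (fun j ω => τ * η j ω) i ω =
      ∑ j ∈ blockIdx n m i, (m / n * τ * lam (m * j / n - (i - 2))) * η j ω := fun i ω => by
    simp only [preAvg, Finset.mul_sum]
    exact Finset.sum_congr rfl fun j _ => by ring
  have hle : ∀ j ∈ blockIdx n m (k + 1) ∪ blockIdx n m (k + 1 + 1), j ≤ n := fun j hj => by
    rcases Finset.mem_union.1 hj with hj | hj <;> exact le_of_mem_blockIdx hj
  simp_rw [hpre]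
  rw [integral_sum_mul_sum_of_orthonormal (fun j hj => hη j (hle j hj))
      (fun j hj l hl => hcov j l (hle j hj) (hle l hl)),
    blockIdx_inter_blockIdx_succ hn hkm, Finset.mul_sum]
  refine Finset.sum_congr rfl fun j hj => ?_
  have hh : (0 : ℝ) < m / n :=
    div_pos (by exact_mod_cast (by omega : 0 < m)) (by exact_mod_cast hn)
  obtain ⟨hj₁, hj₂⟩ := Finset.mem_Icc.1 hj
  have hx₀ : (k : ℝ) ≤ j * (m / n) := (div_le_iff₀ hh).1 (Nat.ceil_le.1 hj₁)
  have hx₁ : j * (m / n) ≤ (k : ℝ) + 1 :=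
    (le_div_iff₀ hh).1 ((Nat.le_floor_iff (by positivity)).1 hj₂)
  set x := j * ((m : ℝ) / n) - k
  have hanti' : lam (x + 1) = -lam (1 - x) := by
    rw [hanti (1 - x) ⟨by linarith, by linarith⟩, neg_neg]; ring_nf
  have e₁ : (m : ℝ) * j / n - ((k + 1 : ℕ) - 2) = x + 1 := by push_cast; ring
  have e₂ : (m : ℝ) * j / n - ((k + 1 + 1 : ℕ) - 2) = x := by push_cast; ring
  rw [e₁, e₂, hanti']
  ring

theorem sq_mOf_div_le {c : ℝ} {n : ℕ} (hc : 0 < c) (hm : 0 < mOf c n) :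
    ((mOf c n : ℝ) / n) ^ 2 ≤ 4 * c ^ 2 / n := by
  set k := ⌊√(n : ℝ) / c⌋₊
  have hmOf : mOf c n = n / k := rfl
  have hk : 0 < k := Nat.pos_of_ne_zero fun hk => by simp [hmOf, hk] at hm
  have hn : (0 : ℝ) < n := by exact_mod_cast hm.trans_le (hmOf ▸ Nat.div_le_self n k)
  have hmk : (mOf c n : ℝ) * k ≤ n := by exact_mod_cast hmOf ▸ Nat.div_mul_le_self n k
  have hsqrt : √(n : ℝ) ≤ 2 * c * k := by
    have := (div_lt_iff₀ hc).1 (Nat.lt_floor_add_one (√(n : ℝ) / c))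
    have hk1 : (1 : ℝ) ≤ k := by exact_mod_cast hk
    nlinarith
  have hm_sqrt : (mOf c n : ℝ) * √(n : ℝ) ≤ 2 * c * n :=
    calc (mOf c n : ℝ) * √(n : ℝ) ≤ mOf c n * (2 * c * k) := by gcongr
      _ = 2 * c * (mOf c n * k) := by ring
      _ ≤ 2 * c * n := by gcongr
  have hm_sq : (mOf c n : ℝ) ^ 2 * n ≤ 4 * c ^ 2 * n ^ 2 := by
    have := pow_le_pow_left₀ (by positivity) hm_sqrt 2
    rw [mul_pow, Real.sq_sqrt hn.le] at this
    linarith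
  rw [div_pow, div_le_div_iff₀ (by positivity) hn]
  nlinarith

theorem preAveragedNoise_adjacent_covariance_general (τ c : ℝ) (hτ : 0 < τ) (hc : 0 < c)
    (lam : ℝ → ℝ) (hlam : IsPreAverageFn lam)
    (Ω : ℕ → Type*) [∀ n, MeasureSpace (Ω n)]
    (W η : (n : ℕ) → ℕ → Ω n → ℝ)
    (hmodel : ∀ n, IsSimplifiedModel n (W n) (η n)) :
    ∃ C > 0, ∃ N : ℕ, ∀ n ≥ N, ∀ i : ℕ, 2 ≤ i → i + 1 ≤ mOf c n →
      |(∫ ω, preAvg lam n (mOf c n) (fun j ω => τ * η n j ω) i ω *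
             preAvg lam n (mOf c n) (fun j ω => τ * η n j ω) (i + 1) ω)
          + τ ^ 2 * ((mOf c n : ℝ) / n) * ∫ u in (0:ℝ)..1, lam u * lam (1 - u)| ≤ C / n := by
  obtain ⟨C, hC, hriemann⟩ := hlam.exists_abs_sum_sub_integral_le
  refine ⟨τ ^ 2 * C * (4 * c ^ 2), by positivity, 0, fun n _ i hi him => ?_⟩
  obtain ⟨k, rfl⟩ : ∃ k, i = k + 1 := ⟨i - 1, by omega⟩
  obtain ⟨-, hmeas, -, -, hcov, -⟩ := hmodel n
  have hm : 0 < mOf c n := by omega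
  have hmn : mOf c n ≤ n := Nat.div_le_self _ _
  have hn : 0 < n := hm.trans_le hmn
  rw [integral_preAvg_mul_preAvg_succ hlam.antisymm (fun j _ => (hmeas j).aestronglyMeasurable)
    hcov hn (by omega)]
  set h : ℝ := (mOf c n : ℝ) / n
  have hh : 0 < h := by positivity
  have hh1 : h ≤ 1 := div_le_one_of_le₀ (by exact_mod_cast hmn) (Nat.cast_nonneg _)
  rw [show ∀ A B : ℝ, -(τ ^ 2 * h) * A + τ ^ 2 * h * B = -(τ ^ 2 * h) * (A - B) by
      intros; ring, abs_mul, abs_neg, abs_of_pos (by positivity : 0 < τ ^ 2 * h)]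
  calc _ ≤ τ ^ 2 * h * (C * h) := by gcongr; exact hriemann h hh hh1 k k.cast_nonneg
    _ = τ ^ 2 * C * h ^ 2 := by ring
    _ ≤ τ ^ 2 * C * (4 * c ^ 2 / n) := by gcongr; exact sq_mOf_div_le hc hm
    _ = τ ^ 2 * C * (4 * c ^ 2) / n := by ring

theorem preAveragedNoise_adjacent_covariance (σ τ c : ℝ) (hσ : 0 < σ) (hτ : 0 < τ) (hc : 0 < c)
    (lam : ℝ → ℝ) (hlam : IsPreAverageFn lam)
    (Ω : ℕ → Type*) [∀ n, MeasureSpace (Ω n)] [∀ n, IsProbabilityMeasure (ℙ : Measure (Ω n))]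
    (W η : (n : ℕ) → ℕ → Ω n → ℝ)
    (hmodel : ∀ n, IsSimplifiedModel n (W n) (η n)) :
    ∃ C > 0, ∃ N : ℕ, ∀ n ≥ N, ∀ i : ℕ, 2 ≤ i → i + 1 ≤ mOf c n →
      |(∫ ω, preAvg lam n (mOf c n) (fun j ω => τ * η n j ω) i ω *
             preAvg lam n (mOf c n) (fun j ω => τ * η n j ω) (i + 1) ω)
          + τ ^ 2 * ((mOf c n : ℝ) / n) * ∫ u in (0:ℝ)..1, lam u * lam (1 - u)| ≤ C / n :=
  preAveragedNoise_adjacent_covariance_general τ c hτ hc lam hlam Ω W η hmodel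
end

section
/- In the simplified model, the rescaled realized quadratic variation τ̂² := (2n)^{−1} Σ_{i=2}^n (Y_{i,n} − Y_{i−1,n})² is a √n-consistent estimator of the noise variance τ²: there is a constant C > 0 such that E[(τ̂² − τ²)²] ≤ C/n for all n ≥ 2. -/
open MeasureTheory ProbabilityTheory Real

/-!
The increments `Xᵢ = Y_{i,n} - Y_{i-1,n}` form a centred Gaussian vector with the tridiagonal
covariance `Cov(Xᵢ, Xᵢ) = σ²/n + 2τ²`, `Cov(Xᵢ, Xᵢ₊₁) = -τ²`. For a centred Gaussian vector
Isserlis' formula `E[Xᵢ² Xⱼ²] = E[Xᵢ²] E[Xⱼ²] + 2 Cov(Xᵢ, Xⱼ)²` turns the mean squared error of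
`c ∑ Xᵢ²` into (bias)² + `2c² ∑ᵢⱼ Cov(Xᵢ, Xⱼ)²`. With `c = 1/(2n)` the bias is `O(1/n)`, and since
each row of the covariance matrix has at most three nonzero entries the double sum is `O(n)`,
so the variance term is `O(1/n)` as well.
-/

open scoped NNReal ENNReal

noncomputable section

lemma hasDerivAt_mul_exp_mul_sq {p : ℝ → ℝ} {p' t : ℝ} (hp : HasDerivAt p p' t) (a : ℝ) :
    HasDerivAt (fun t => p t * exp (a * t ^ 2)) ((p' + 2 * a * t * p t) * exp (a * t ^ 2)) t := by
  have he : HasDerivAt (fun t => exp (a * t ^ 2)) (exp (a * t ^ 2) * (a * (2 * t))) t := by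
    simpa using ((hasDerivAt_pow 2 t).const_mul a).exp
  exact (hp.mul he).congr_deriv (by ring)

lemma integral_sq_and_pow_four_gaussianReal (v : ℝ≥0) :
    ∫ x, x ^ 2 ∂gaussianReal 0 v = v ∧ ∫ x, x ^ 4 ∂gaussianReal 0 v = 3 * (v : ℝ) ^ 2 := by
  set a : ℝ := v / 2 with ha
  have hmgf : mgf (fun x => x) (gaussianReal 0 v) = fun t => 1 * exp (a * t ^ 2) := by
    rw [mgf_fun_id_gaussianReal]; ext t; rw [ha]; ring_nf
  have hmoment (k : ℕ) : ∫ x, x ^ k ∂gaussianReal 0 v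
      = iteratedDeriv k (fun t => 1 * exp (a * t ^ 2)) 0 := by
    rw [← hmgf, iteratedDeriv_mgf_zero (by simp)]; rfl
  have d1 : deriv (fun t => 1 * exp (a * t ^ 2)) = fun t => (2 * a * t) * exp (a * t ^ 2) :=
    funext fun t => ((hasDerivAt_mul_exp_mul_sq (hasDerivAt_const t 1) a).congr_deriv
      (by ring)).deriv
  have d2 : deriv (fun t => (2 * a * t) * exp (a * t ^ 2))
      = fun t => (2 * a + 4 * a ^ 2 * t ^ 2) * exp (a * t ^ 2) :=
    funext fun t => ((hasDerivAt_mul_exp_mul_sq ((hasDerivAt_id' t).const_mul (2 * a)) a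
      ).congr_deriv (by ring)).deriv
  have d3 : deriv (fun t => (2 * a + 4 * a ^ 2 * t ^ 2) * exp (a * t ^ 2))
      = fun t => (12 * a ^ 2 * t + 8 * a ^ 3 * t ^ 3) * exp (a * t ^ 2) :=
    funext fun t => ((hasDerivAt_mul_exp_mul_sq
      (((hasDerivAt_pow 2 t).const_mul (4 * a ^ 2)).const_add (2 * a)) a).congr_deriv
      (by push_cast; ring)).deriv
  have d4 : deriv (fun t => (12 * a ^ 2 * t + 8 * a ^ 3 * t ^ 3) * exp (a * t ^ 2)) 0
      = 12 * a ^ 2 :=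
    ((hasDerivAt_mul_exp_mul_sq (((hasDerivAt_id' 0).const_mul (12 * a ^ 2)).add
      ((hasDerivAt_pow 3 0).const_mul (8 * a ^ 3))) a).congr_deriv (by simp)).deriv
  constructor
  · rw [hmoment, iteratedDeriv_succ, iteratedDeriv_one, d1, d2]
    simp [ha]; ring
  · rw [hmoment, iteratedDeriv_succ, iteratedDeriv_succ, iteratedDeriv_succ, iteratedDeriv_one,
      d1, d2, d3, d4, ha]
    ring

section GaussianSpace

variable {Ω : Type*} [MeasureSpace Ω]

def IsCenteredGaussianSpace (V : Submodule ℝ (Ω → ℝ)) : Prop :=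
  ∀ Z ∈ V, ∃ v : ℝ≥0, Measure.map Z ℙ = gaussianReal 0 v

namespace IsCenteredGaussianSpace

variable {V : Submodule ℝ (Ω → ℝ)} {X Y Z : Ω → ℝ}

lemma memLp (hV : IsCenteredGaussianSpace V) (hZ : Z ∈ V) {p : ℝ≥0∞} (hp : p ≠ ∞) :
    MemLp Z p := by
  obtain ⟨v, hv⟩ := hV Z hZ
  have hZm : AEMeasurable Z := aemeasurable_of_map_neZero (by rw [hv]; infer_instance)
  exact (memLp_map_measure_iff aestronglyMeasurable_id hZm).mp (hv ▸ memLp_id_gaussianReal' p hp)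

lemma integrable_pow (hV : IsCenteredGaussianSpace V) [IsFiniteMeasure (ℙ : Measure Ω)]
    (hZ : Z ∈ V) (k : ℕ) : Integrable fun ω => Z ω ^ k := by
  have hZ := hV.memLp hZ (p := k) (by simp)
  exact hZ.integrable_norm_pow'.mono' (hZ.aestronglyMeasurable.pow k)
    (ae_of_all _ fun ω => by simp [norm_pow])

lemma integrable_mul (hV : IsCenteredGaussianSpace V) (hX : X ∈ V) (hY : Y ∈ V) :
    Integrable fun ω => X ω * Y ω :=
  (hV.memLp hX (p := 2) (by simp)).integrable_mul (hV.memLp hY (p := 2) (by simp))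

lemma integrable_sq_mul_sq (hV : IsCenteredGaussianSpace V) [IsFiniteMeasure (ℙ : Measure Ω)]
    (hX : X ∈ V) (hY : Y ∈ V) : Integrable fun ω => X ω ^ 2 * Y ω ^ 2 :=
  ((hV.integrable_pow hX 4).add (hV.integrable_pow hY 4)).mono'
    (((hV.memLp hX (p := 2) (by simp)).aestronglyMeasurable.pow 2).mul
      ((hV.memLp hY (p := 2) (by simp)).aestronglyMeasurable.pow 2))
    (ae_of_all _ fun ω => by
      rw [Pi.add_apply, Real.norm_eq_abs, abs_of_nonneg (by positivity)]
      nlinarith [sq_nonneg (X ω ^ 2 - Y ω ^ 2)])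

lemma integral_pow_four (hV : IsCenteredGaussianSpace V) (hZ : Z ∈ V) :
    ∫ ω, Z ω ^ 4 = 3 * (∫ ω, Z ω ^ 2) ^ 2 := by
  obtain ⟨v, hv⟩ := hV Z hZ
  have hZm : AEMeasurable Z := aemeasurable_of_map_neZero (by rw [hv]; infer_instance)
  have hmoment (k : ℕ) : ∫ ω, Z ω ^ k = ∫ x, x ^ k ∂gaussianReal 0 v := by
    rw [← hv, integral_map hZm (by fun_prop)]
  obtain ⟨h2, h4⟩ := integral_sq_and_pow_four_gaussianReal v
  rw [hmoment, hmoment, h2, h4]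

/-- Isserlis' formula, obtained by polarization: `X ± Y` lie in `V` as well, and
`(X + Y)⁴ + (X - Y)⁴ = 2 X⁴ + 12 X² Y² + 2 Y⁴`. -/
lemma integral_sq_mul_sq (hV : IsCenteredGaussianSpace V) [IsFiniteMeasure (ℙ : Measure Ω)]
    (hX : X ∈ V) (hY : Y ∈ V) :
    ∫ ω, X ω ^ 2 * Y ω ^ 2
      = (∫ ω, X ω ^ 2) * (∫ ω, Y ω ^ 2) + 2 * (∫ ω, X ω * Y ω) ^ 2 := by
  have hXY := hV.integrable_mul hX hY
  have hX2 := hV.integrable_pow hX 2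
  have hY2 := hV.integrable_pow hY 2
  have hX4 := hV.integrable_pow hX 4
  have hY4 := hV.integrable_pow hY 4
  have hadd4 := hV.integrable_pow (V.add_mem hX hY) 4
  have hsub4 := hV.integrable_pow (V.sub_mem hX hY) 4
  have h4add := hV.integral_pow_four (V.add_mem hX hY)
  have h4sub := hV.integral_pow_four (V.sub_mem hX hY)
  simp only [Pi.add_apply, Pi.sub_apply] at hadd4 hsub4 h4add h4sub
  have hadd2 : ∫ ω, (X ω + Y ω) ^ 2
      = (∫ ω, X ω ^ 2) + 2 * (∫ ω, X ω * Y ω) + ∫ ω, Y ω ^ 2 := by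
    have h (ω : Ω) : (X ω + Y ω) ^ 2 = X ω ^ 2 + 2 * (X ω * Y ω) + Y ω ^ 2 := by ring
    simp only [h]
    rw [integral_add (by fun_prop) hY2, integral_add hX2 (by fun_prop), integral_const_mul]
  have hsub2 : ∫ ω, (X ω - Y ω) ^ 2
      = (∫ ω, X ω ^ 2) - 2 * (∫ ω, X ω * Y ω) + ∫ ω, Y ω ^ 2 := by
    have h (ω : Ω) : (X ω - Y ω) ^ 2 = X ω ^ 2 - 2 * (X ω * Y ω) + Y ω ^ 2 := by ring
    simp only [h]
    rw [integral_add (by fun_prop) hY2, integral_sub hX2 (by fun_prop), integral_const_mul]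
  have hpolar : ∫ ω, X ω ^ 2 * Y ω ^ 2 = ((∫ ω, (X ω + Y ω) ^ 4) + (∫ ω, (X ω - Y ω) ^ 4)
      - 2 * (∫ ω, X ω ^ 4) - 2 * (∫ ω, Y ω ^ 4)) / 12 := by
    have h (ω : Ω) : X ω ^ 2 * Y ω ^ 2
        = ((X ω + Y ω) ^ 4 + (X ω - Y ω) ^ 4 - 2 * X ω ^ 4 - 2 * Y ω ^ 4) / 12 := by ring
    simp only [h]
    rw [integral_div, integral_sub (by fun_prop) (by fun_prop),
      integral_sub (by fun_prop) (by fun_prop), integral_add hadd4 hsub4,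
      integral_const_mul, integral_const_mul]
  rw [hpolar, h4add, h4sub, hV.integral_pow_four hX, hV.integral_pow_four hY, hadd2, hsub2]
  ring

lemma integral_mul_sum_sq_sub_sq (hV : IsCenteredGaussianSpace V)
    [IsProbabilityMeasure (ℙ : Measure Ω)] {ι : Type*} {s : Finset ι} {X : ι → Ω → ℝ}
    (hX : ∀ i ∈ s, X i ∈ V) {Γ : ι → ι → ℝ}
    (hΓ : ∀ i ∈ s, ∀ j ∈ s, ∫ ω, X i ω * X j ω = Γ i j) (c t : ℝ) :
    ∫ ω, (c * ∑ i ∈ s, X i ω ^ 2 - t) ^ 2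
      = (c * ∑ i ∈ s, Γ i i - t) ^ 2 + 2 * c ^ 2 * ∑ i ∈ s, ∑ j ∈ s, Γ i j ^ 2 := by
  have hsq : ∀ i ∈ s, ∫ ω, X i ω ^ 2 = Γ i i := fun i hi => by simpa [sq] using hΓ i hi i hi
  have hX2 : ∀ i ∈ s, Integrable fun ω => X i ω ^ 2 := fun i hi => hV.integrable_pow (hX i hi) 2
  have hX22 : ∀ i ∈ s, ∀ j ∈ s, Integrable fun ω => X i ω ^ 2 * X j ω ^ 2 := fun i hi j hj =>
    hV.integrable_sq_mul_sq (hX i hi) (hX j hj)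
  set Q : Ω → ℝ := fun ω => ∑ i ∈ s, X i ω ^ 2
  have hQ : Integrable Q := integrable_finsetSum s hX2
  have hQ_sq (ω : Ω) : Q ω ^ 2 = ∑ i ∈ s, ∑ j ∈ s, X i ω ^ 2 * X j ω ^ 2 := by
    rw [sq, Finset.sum_mul_sum]
  have hQ2 : Integrable fun ω => Q ω ^ 2 := by
    simp only [hQ_sq]
    exact integrable_finsetSum s fun i hi => integrable_finsetSum s (hX22 i hi)
  have hintQ : ∫ ω, Q ω = ∑ i ∈ s, Γ i i := by
    rw [integral_finsetSum s hX2]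
    exact Finset.sum_congr rfl hsq
  have hintQ2 : ∫ ω, Q ω ^ 2 = (∑ i ∈ s, Γ i i) ^ 2 + 2 * ∑ i ∈ s, ∑ j ∈ s, Γ i j ^ 2 :=
    calc ∫ ω, Q ω ^ 2 = ∫ ω, ∑ i ∈ s, ∑ j ∈ s, X i ω ^ 2 * X j ω ^ 2 := by simp only [hQ_sq]
      _ = ∑ i ∈ s, ∑ j ∈ s, ∫ ω, X i ω ^ 2 * X j ω ^ 2 := by
        rw [integral_finsetSum s fun i hi => integrable_finsetSum s (hX22 i hi)]
        exact Finset.sum_congr rfl fun i hi => integral_finsetSum s (hX22 i hi)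
      _ = ∑ i ∈ s, ∑ j ∈ s, (Γ i i * Γ j j + 2 * Γ i j ^ 2) :=
        Finset.sum_congr rfl fun i hi => Finset.sum_congr rfl fun j hj => by
          rw [hV.integral_sq_mul_sq (hX i hi) (hX j hj), hsq i hi, hsq j hj, hΓ i hi j hj]
      _ = _ := by
        rw [sq, Finset.sum_mul_sum, Finset.mul_sum]
        simp only [Finset.mul_sum, Finset.sum_add_distrib]
  show ∫ ω, (c * Q ω - t) ^ 2 = _
  have h (ω : Ω) : (c * Q ω - t) ^ 2 = c ^ 2 * Q ω ^ 2 - 2 * c * t * Q ω + t ^ 2 := by ring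
  simp only [h]
  rw [integral_add (by fun_prop) (integrable_const _), integral_sub (by fun_prop) (by fun_prop),
    integral_const_mul, integral_const_mul, integral_const, hintQ, hintQ2]
  simp only [probReal_univ, one_smul]
  ring

def integralMul (hV : IsCenteredGaussianSpace V) : V →ₗ[ℝ] V →ₗ[ℝ] ℝ :=
  LinearMap.mk₂ ℝ (fun X Y => ∫ ω, (X : Ω → ℝ) ω * (Y : Ω → ℝ) ω)
    (fun X X' Y => by
      simp only [Submodule.coe_add, Pi.add_apply, add_mul]
      exact integral_add (hV.integrable_mul X.2 Y.2) (hV.integrable_mul X'.2 Y.2))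
    (fun c X Y => by
      simp only [Submodule.coe_smul, Pi.smul_apply, smul_eq_mul, mul_assoc, integral_const_mul])
    (fun X Y Y' => by
      simp only [Submodule.coe_add, Pi.add_apply, mul_add]
      exact integral_add (hV.integrable_mul X.2 Y.2) (hV.integrable_mul X.2 Y'.2))
    (fun c X Y => by
      simp only [Submodule.coe_smul, Pi.smul_apply, smul_eq_mul, mul_left_comm,
        integral_const_mul])

@[simp]
lemma integralMul_apply (hV : IsCenteredGaussianSpace V) (X Y : V) :
    hV.integralMul X Y = ∫ ω, (X : Ω → ℝ) ω * (Y : Ω → ℝ) ω :=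
  rfl

end IsCenteredGaussianSpace

end GaussianSpace

def incrementCov (σ τ : ℝ) (n i j : ℕ) : ℝ :=
  if i = j then σ ^ 2 / n + 2 * τ ^ 2 else if i + 1 = j ∨ j + 1 = i then -τ ^ 2 else 0

lemma min_sub_min_sub_min_add_min (i j : ℤ) :
    min i j - min i (j - 1) - min (i - 1) j + min (i - 1) (j - 1) = if i = j then 1 else 0 := by
  simp only [min_def]
  split_ifs <;> omega

section SimplifiedModel

variable {Ω : Type*} {n : ℕ} {W η : ℕ → Ω → ℝ}

def gridCombination (n : ℕ) (W η : ℕ → Ω → ℝ) : (ℕ → ℝ) × (ℕ → ℝ) →ₗ[ℝ] (Ω → ℝ) where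
  toFun ab ω := ∑ j ∈ Finset.range (n + 1), (ab.1 j * W j ω + ab.2 j * η j ω)
  map_add' ab ab' := by
    ext ω
    simp only [Prod.fst_add, Prod.snd_add, Pi.add_apply, ← Finset.sum_add_distrib]
    exact Finset.sum_congr rfl fun j _ => by ring
  map_smul' c ab := by
    ext ω
    simp only [Prod.smul_fst, Prod.smul_snd, Pi.smul_apply, smul_eq_mul, RingHom.id_apply,
      Finset.mul_sum]
    exact Finset.sum_congr rfl fun j _ => by ring

lemma W_mem_range_gridCombination {j : ℕ} (hj : j ≤ n) :
    W j ∈ LinearMap.range (gridCombination n W η) :=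
  ⟨(Pi.single j 1, 0), by ext ω; simp [gridCombination, Pi.single_apply, Nat.lt_succ_of_le hj]⟩

lemma η_mem_range_gridCombination {j : ℕ} (hj : j ≤ n) :
    η j ∈ LinearMap.range (gridCombination n W η) :=
  ⟨(0, Pi.single j 1), by ext ω; simp [gridCombination, Pi.single_apply, Nat.lt_succ_of_le hj]⟩

lemma increment_mem_range_gridCombination (σ τ : ℝ) {i : ℕ} (hi : 1 ≤ i) (hin : i ≤ n) :
    (fun ω => obs σ τ W η i ω - obs σ τ W η (i - 1) ω)
      ∈ LinearMap.range (gridCombination n W η) := by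
  have h : (fun ω => obs σ τ W η i ω - obs σ τ W η (i - 1) ω)
      = σ • (W i - W (i - 1)) + τ • (η i - η (i - 1)) := by
    ext ω; simp only [obs, Pi.add_apply, Pi.smul_apply, Pi.sub_apply, smul_eq_mul]; ring
  rw [h]
  exact add_mem
    (Submodule.smul_mem _ _ (sub_mem (W_mem_range_gridCombination hin)
      (W_mem_range_gridCombination (by omega))))
    (Submodule.smul_mem _ _ (sub_mem (η_mem_range_gridCombination hin)
      (η_mem_range_gridCombination (by omega))))

lemma IsSimplifiedModel.isCenteredGaussianSpace [MeasureSpace Ω] (h : IsSimplifiedModel n W η) :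
    IsCenteredGaussianSpace (LinearMap.range (gridCombination n W η)) := by
  rintro _ ⟨ab, rfl⟩
  exact h.2.2.1 ab.1 ab.2

lemma IsSimplifiedModel.integral_increment_mul [MeasureSpace Ω] (h : IsSimplifiedModel n W η)
    (σ τ : ℝ) {i j : ℕ} (hi : 1 ≤ i) (hin : i ≤ n) (hj : 1 ≤ j) (hjn : j ≤ n) :
    ∫ ω, (obs σ τ W η i ω - obs σ τ W η (i - 1) ω) * (obs σ τ W η j ω - obs σ τ W η (j - 1) ω)
      = incrementCov σ τ n i j := by
  set V := LinearMap.range (gridCombination n W η)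
  have hV : IsCenteredGaussianSpace V := h.isCenteredGaussianSpace
  obtain ⟨-, -, -, hWW, hηη, hWη⟩ := h
  set B := hV.integralMul
  let w (k : ℕ) (hk : k ≤ n) : V := ⟨W k, W_mem_range_gridCombination hk⟩
  let e (k : ℕ) (hk : k ≤ n) : V := ⟨η k, η_mem_range_gridCombination hk⟩
  have hww (k l : ℕ) (hk : k ≤ n) (hl : l ≤ n) : B (w k hk) (w l hl) = min (k : ℝ) l / n :=
    hWW k l hk hl
  have hee (k l : ℕ) (hk : k ≤ n) (hl : l ≤ n) :
      B (e k hk) (e l hl) = if k = l then 1 else 0 :=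
    hηη k l hk hl
  have hwe (k l : ℕ) (hk : k ≤ n) (hl : l ≤ n) : B (w k hk) (e l hl) = 0 := hWη k l hk hl
  have hew (k l : ℕ) (hk : k ≤ n) (hl : l ≤ n) : B (e k hk) (w l hl) = 0 :=
    (integral_congr_ae (ae_of_all _ fun ω => mul_comm _ _)).trans (hWη l k hl hk)
  let x (k : ℕ) (hk : 1 ≤ k) (hkn : k ≤ n) : V :=
    σ • (w k hkn - w (k - 1) (by omega)) + τ • (e k hkn - e (k - 1) (by omega))
  have hx (k : ℕ) (hk : 1 ≤ k) (hkn : k ≤ n) (ω : Ω) :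
      (x k hk hkn : Ω → ℝ) ω = obs σ τ W η k ω - obs σ τ W η (k - 1) ω := by
    simp [x, w, e, obs]; ring
  have hmin : min (i : ℝ) j - min (i : ℝ) (j - 1) - min ((i : ℝ) - 1) j
      + min ((i : ℝ) - 1) (j - 1) = if i = j then 1 else 0 := by
    exact_mod_cast min_sub_min_sub_min_add_min i j
  calc _ = B (x i hi hin) (x j hj hjn) := by
        simp only [B, IsCenteredGaussianSpace.integralMul_apply, hx]
    _ = _ := by
      simp only [x, map_add, map_sub, map_smul, LinearMap.add_apply, LinearMap.sub_apply,
        LinearMap.smul_apply, smul_eq_mul, hww, hee, hwe, hew]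
      push_cast [Nat.cast_sub hi, Nat.cast_sub hj]
      unfold incrementCov
      split_ifs at hmin ⊢ <;> first | omega | linear_combination (σ ^ 2 / n) * hmin

end SimplifiedModel

lemma incrementCov_sq_le (σ τ : ℝ) {n : ℕ} (hn : 1 ≤ n) (i j : ℕ) :
    incrementCov σ τ n i j ^ 2 ≤ (σ ^ 2 + 2 * τ ^ 2) ^ 2 := by
  have hσ : σ ^ 2 / n ≤ σ ^ 2 := div_le_self (sq_nonneg σ) (by exact_mod_cast hn)
  unfold incrementCov
  split_ifs
  · gcongr
  · rw [neg_sq]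
    gcongr
    linarith [sq_nonneg σ, sq_nonneg τ]
  · rw [zero_pow two_ne_zero]
    positivity

lemma sum_incrementCov_sq_le (σ τ : ℝ) {n : ℕ} (hn : 1 ≤ n) (i : ℕ) (s : Finset ℕ) :
    ∑ j ∈ s, incrementCov σ τ n i j ^ 2 ≤ 3 * (σ ^ 2 + 2 * τ ^ 2) ^ 2 := by
  have hband : ∀ j ∈ s, incrementCov σ τ n i j ^ 2 ≠ 0 → j ∈ ({i - 1, i, i + 1} : Finset ℕ) := by
    intro j _ hj
    unfold incrementCov at hj
    split_ifs at hj <;> simp at hj ⊢ <;> omega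
  calc ∑ j ∈ s, incrementCov σ τ n i j ^ 2
      = ∑ j ∈ s with j ∈ ({i - 1, i, i + 1} : Finset ℕ), incrementCov σ τ n i j ^ 2 :=
        (Finset.sum_filter_of_ne hband).symm
    _ ≤ (s.filter (· ∈ ({i - 1, i, i + 1} : Finset ℕ))).card • (σ ^ 2 + 2 * τ ^ 2) ^ 2 :=
        Finset.sum_le_card_nsmul _ _ _ fun j _ => incrementCov_sq_le σ τ hn i j
    _ ≤ 3 * (σ ^ 2 + 2 * τ ^ 2) ^ 2 := by
        rw [nsmul_eq_mul]
        gcongr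
        exact_mod_cast (Finset.card_le_card fun j hj => (Finset.mem_filter.1 hj).2).trans
          Finset.card_le_three

lemma sum_sum_incrementCov_sq_le (σ τ : ℝ) {n : ℕ} (hn : 1 ≤ n) :
    ∑ i ∈ Finset.Icc 2 n, ∑ j ∈ Finset.Icc 2 n, incrementCov σ τ n i j ^ 2
      ≤ n * (3 * (σ ^ 2 + 2 * τ ^ 2) ^ 2) :=
  calc _ ≤ ∑ i ∈ Finset.Icc 2 n, 3 * (σ ^ 2 + 2 * τ ^ 2) ^ 2 :=
        Finset.sum_le_sum fun i _ => sum_incrementCov_sq_le σ τ hn i _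
    _ ≤ n * (3 * (σ ^ 2 + 2 * τ ^ 2) ^ 2) := by
        rw [Finset.sum_const, nsmul_eq_mul, Nat.card_Icc]
        gcongr
        exact_mod_cast (by omega : n + 1 - 2 ≤ n)

lemma sum_incrementCov_self (σ τ : ℝ) {n : ℕ} (hn : 1 ≤ n) :
    ∑ i ∈ Finset.Icc 2 n, incrementCov σ τ n i i = (n - 1) * (σ ^ 2 / n + 2 * τ ^ 2) := by
  simp only [incrementCov, if_pos, Finset.sum_const, Nat.card_Icc, nsmul_eq_mul]
  rw [show n + 1 - 2 = n - 1 by omega, Nat.cast_sub hn, Nat.cast_one]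

lemma bias_sq_add_variance_le (σ τ : ℝ) {N Q : ℝ} (hN : 2 ≤ N)
    (hQ : Q ≤ N * (3 * (σ ^ 2 + 2 * τ ^ 2) ^ 2)) :
    ((2 * N)⁻¹ * ((N - 1) * (σ ^ 2 / N + 2 * τ ^ 2)) - τ ^ 2) ^ 2 + 2 * ((2 * N)⁻¹) ^ 2 * Q
      ≤ 3 * (σ ^ 2 + 2 * τ ^ 2) ^ 2 / N := by
  have hN0 : 0 < N := by linarith
  set K := σ ^ 2 + 2 * τ ^ 2
  have hbias : (2 * N)⁻¹ * ((N - 1) * (σ ^ 2 / N + 2 * τ ^ 2)) - τ ^ 2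
      = ((N - 1) / N * σ ^ 2 - 2 * τ ^ 2) / (2 * N) := by
    field_simp; ring
  have hbias_le : ((N - 1) / N * σ ^ 2 - 2 * τ ^ 2) ^ 2 ≤ K ^ 2 := by
    have h1 : 0 ≤ (N - 1) / N * σ ^ 2 := mul_nonneg (div_nonneg (by linarith) hN0.le) (sq_nonneg σ)
    have h2 : (N - 1) / N * σ ^ 2 ≤ σ ^ 2 :=
      mul_le_of_le_one_left (sq_nonneg σ) ((div_le_one hN0).2 (by linarith))
    apply sq_le_sq' <;> nlinarith [sq_nonneg σ, sq_nonneg τ]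
  have hvar : 2 * ((2 * N)⁻¹) ^ 2 * Q ≤ 3 * K ^ 2 / (2 * N) := by
    calc 2 * ((2 * N)⁻¹) ^ 2 * Q ≤ 2 * ((2 * N)⁻¹) ^ 2 * (N * (3 * K ^ 2)) := by gcongr
      _ = 3 * K ^ 2 / (2 * N) := by field_simp
  rw [hbias, div_pow]
  calc _ ≤ K ^ 2 / (2 * N) ^ 2 + 3 * K ^ 2 / (2 * N) := by gcongr
    _ ≤ 3 * K ^ 2 / N := by
      rw [div_add_div _ _ (by positivity) (by positivity), div_le_div_iff₀ (by positivity) hN0]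
      nlinarith [mul_nonneg (mul_nonneg (sq_nonneg K) (sq_nonneg N)) (by linarith : 0 ≤ N - 1)]

end

theorem realizedQV_estimates_noise_variance_general (σ τ : ℝ) (hτ : 0 < τ)
    (Ω : ℕ → Type*) [∀ n, MeasureSpace (Ω n)] [∀ n, IsProbabilityMeasure (ℙ : Measure (Ω n))]
    (W η : (n : ℕ) → ℕ → Ω n → ℝ)
    (hmodel : ∀ n, IsSimplifiedModel n (W n) (η n)) :
    ∃ C > 0, ∀ n : ℕ, 2 ≤ n →
      (∫ ω, ((2 * (n : ℝ))⁻¹ * (∑ i ∈ Finset.Icc 2 n,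
          (obs σ τ (W n) (η n) i ω - obs σ τ (W n) (η n) (i - 1) ω) ^ 2) - τ ^ 2) ^ 2)
        ≤ C / n := by
  refine ⟨3 * (σ ^ 2 + 2 * τ ^ 2) ^ 2, by positivity, fun n hn => ?_⟩
  have hmem {i : ℕ} (hi : i ∈ Finset.Icc 2 n) : 1 ≤ i ∧ i ≤ n := by
    have := Finset.mem_Icc.1 hi; omega
  rw [(hmodel n).isCenteredGaussianSpace.integral_mul_sum_sq_sub_sq
      (fun i hi => increment_mem_range_gridCombination σ τ (hmem hi).1 (hmem hi).2)
      (fun i hi j hj => (hmodel n).integral_increment_mul σ τ (hmem hi).1 (hmem hi).2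
        (hmem hj).1 (hmem hj).2),
    sum_incrementCov_self σ τ (by omega)]
  exact bias_sq_add_variance_le σ τ (by exact_mod_cast hn)
    (sum_sum_incrementCov_sq_le σ τ (by omega))

theorem realizedQV_estimates_noise_variance (σ τ : ℝ) (hσ : 0 < σ) (hτ : 0 < τ)
    (Ω : ℕ → Type*) [∀ n, MeasureSpace (Ω n)] [∀ n, IsProbabilityMeasure (ℙ : Measure (Ω n))]
    (W η : (n : ℕ) → ℕ → Ω n → ℝ)
    (hmodel : ∀ n, IsSimplifiedModel n (W n) (η n)) :
    ∃ C > 0, ∀ n : ℕ, 2 ≤ n →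
      (∫ ω, ((2 * (n : ℝ))⁻¹ * (∑ i ∈ Finset.Icc 2 n,
          (obs σ τ (W n) (η n) i ω - obs σ τ (W n) (η n) (i - 1) ω) ^ 2) - τ ^ 2) ^ 2)
        ≤ C / n :=
  realizedQV_estimates_noise_variance_general σ τ hτ Ω W η hmodel
end
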